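/- arXiv:hep-th/0408141 — 2 statements merged into one kernel-verified Lean document; each statement's English description precedes it below -/
import Mathlib

section
/- Let f be a real harmonic function on a connected open simply connected subset of ℝ², i.e. ∂²f/∂u² + ∂²f/∂v² = 0. Then either f is constant, or the set of points where the gradient of f vanishes consists of isolated points. -/
/-!
Identify `ℝ²` with `ℂ` via `z ↦ (re z, im z)`. Together with the symmetry of second derivatives,
harmonicity of `f` is exactly the Cauchy–Riemann system for `∂f = ∂f/∂u - i ∂f/∂v`, so `∂f` is
holomorphic on the connected open set corresponding to `U`. By the identity theorem, either `∂f`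
vanishes identically, and then `f` has zero derivative on the connected set `U` and is constant,
or the zeros of `∂f`, which are the critical points of `f`, form a discrete subset of `U`.
-/

open Filter Topology

/-- Partial derivative in direction `i` of a scalar function on `ℝ²`. -/
noncomputable def pd (i : Fin 2) (f : (Fin 2 → ℝ) → ℝ) (p : Fin 2 → ℝ) : ℝ :=
  fderiv ℝ f p (Pi.single i 1)

open Complex InnerProductSpace Laplacian

noncomputable def reImEquiv : ℂ ≃L[ℝ] (Fin 2 → ℝ) :=
  basisOneI.equivFun.toContinuousLinearEquiv

lemma reImEquiv_apply (z : ℂ) : reImEquiv z = ![z.re, z.im] := by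
  simp [reImEquiv]

lemma reImEquiv_one : reImEquiv 1 = Pi.single 0 1 := by
  ext i; fin_cases i <;> simp [reImEquiv_apply]

lemma reImEquiv_I : reImEquiv I = Pi.single 1 1 := by
  ext i; fin_cases i <;> simp [reImEquiv_apply]

variable {f : (Fin 2 → ℝ) → ℝ}

lemma fderiv_comp_reImEquiv_one (z : ℂ) :
    fderiv ℝ (f ∘ reImEquiv) z 1 = pd 0 f (reImEquiv z) := by
  simp [ContinuousLinearEquiv.comp_right_fderiv, pd, reImEquiv_one]

lemma fderiv_comp_reImEquiv_I (z : ℂ) :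
    fderiv ℝ (f ∘ reImEquiv) z I = pd 1 f (reImEquiv z) := by
  simp [ContinuousLinearEquiv.comp_right_fderiv, pd, reImEquiv_I]

lemma laplacian_comp_reImEquiv {z : ℂ} (hf : ContDiffAt ℝ 2 f (reImEquiv z)) :
    Δ (f ∘ reImEquiv) z = pd 0 (pd 0 f) (reImEquiv z) + pd 1 (pd 1 f) (reImEquiv z) := by
  have hd : DifferentiableAt ℝ (fderiv ℝ (f ∘ reImEquiv)) z :=
    ((hf.comp z reImEquiv.contDiff.contDiffAt).fderiv_right le_rfl).differentiableAt one_ne_zero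
  have h1 : (fun w ↦ fderiv ℝ (f ∘ reImEquiv) w 1) = pd 0 f ∘ reImEquiv :=
    funext fderiv_comp_reImEquiv_one
  have hI : (fun w ↦ fderiv ℝ (f ∘ reImEquiv) w I) = pd 1 f ∘ reImEquiv :=
    funext fderiv_comp_reImEquiv_I
  rw [laplacian_eq_iteratedFDeriv_complexPlane]
  simp only [iteratedFDeriv_two_apply, Matrix.cons_val_zero, Matrix.cons_val_one]
  have hclm (v : ℂ) : fderiv ℝ (fderiv ℝ (f ∘ reImEquiv)) z v v =
      fderiv ℝ (fun w ↦ fderiv ℝ (f ∘ reImEquiv) w v) z v := by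
    simp [fderiv_clm_apply hd (differentiableAt_const v)]
  rw [hclm, hclm, h1, hI, fderiv_comp_reImEquiv_one, fderiv_comp_reImEquiv_I]

lemma harmonicOnNhd_comp_reImEquiv {U : Set (Fin 2 → ℝ)} (hU : IsOpen U)
    (hf : ContDiffOn ℝ 2 f U) (hharm : ∀ p ∈ U, pd 0 (pd 0 f) p + pd 1 (pd 1 f) p = 0) :
    HarmonicOnNhd (f ∘ reImEquiv) (reImEquiv ⁻¹' U) := by
  have hV : IsOpen (reImEquiv ⁻¹' U) := hU.preimage reImEquiv.continuous
  intro z hz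
  refine ⟨(hf.contDiffAt (hU.mem_nhds hz)).comp z reImEquiv.contDiff.contDiffAt, ?_⟩
  filter_upwards [hV.mem_nhds hz] with w hw
  rw [laplacian_comp_reImEquiv (hf.contDiffAt (hU.mem_nhds hw))]
  exact hharm _ hw

noncomputable def complexGradient (f : (Fin 2 → ℝ) → ℝ) (z : ℂ) : ℂ :=
  pd 0 f (reImEquiv z) - I * pd 1 f (reImEquiv z)

lemma complexGradient_eq_zero_iff {z : ℂ} :
    complexGradient f z = 0 ↔ pd 0 f (reImEquiv z) = 0 ∧ pd 1 f (reImEquiv z) = 0 := by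
  simp [complexGradient, Complex.ext_iff]

lemma analyticOnNhd_complexGradient {U : Set (Fin 2 → ℝ)} (hU : IsOpen U)
    (hf : ContDiffOn ℝ 2 f U) (hharm : ∀ p ∈ U, pd 0 (pd 0 f) p + pd 1 (pd 1 f) p = 0) :
    AnalyticOnNhd ℂ (complexGradient f) (reImEquiv ⁻¹' U) := by
  intro z hz
  have h := HarmonicAt.analyticAt_complex_partial (harmonicOnNhd_comp_reImEquiv hU hf hharm z hz)
  simp only [fderiv_comp_reImEquiv_one, fderiv_comp_reImEquiv_I] at h
  exact h

lemma fderiv_eq_zero_of_pd_eq_zero {p : Fin 2 → ℝ} (h0 : pd 0 f p = 0) (h1 : pd 1 f p = 0) :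
    fderiv ℝ f p = 0 := by
  refine ContinuousLinearMap.coe_injective ((Pi.basisFun ℝ (Fin 2)).ext fun i ↦ ?_)
  fin_cases i <;> simpa [pd] using ‹_›

lemma nhdsWithin_sdiff_singleton_eq_bot_of_mem_codiscreteWithin {X : Type*} [TopologicalSpace X]
    {S T : Set X} (h : T ∈ codiscreteWithin S) {x : X} (hx : x ∈ S) :
    𝓝[(S \ T) \ {x}] x = ⊥ := by
  have := disjoint_iff.1 (mem_codiscreteWithin.1 h x hx)
  rwa [← nhdsWithin_inter', Set.inter_comm, ← Set.sdiff_eq] at this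

lemma is_const_of_complexGradient_eqOn_zero {U : Set (Fin 2 → ℝ)} (hU : IsOpen U)
    (hUc : IsPreconnected U) (hf : DifferentiableOn ℝ f U)
    (h : Set.EqOn (complexGradient f) 0 (reImEquiv ⁻¹' U)) :
    ∀ p ∈ U, ∀ q ∈ U, f p = f q := by
  intro p hp q hq
  refine hU.is_const_of_fderiv_eq_zero hUc hf (fun x hx ↦ ?_) hp hq
  have hx' : reImEquiv.symm x ∈ reImEquiv ⁻¹' U := by simpa using hx
  obtain ⟨h0, h1⟩ := complexGradient_eq_zero_iff.1 (h hx')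
  rw [ContinuousLinearEquiv.apply_symm_apply] at h0 h1
  exact fderiv_eq_zero_of_pd_eq_zero h0 h1

lemma setOf_not_gradient_eq_zero_mem_codiscreteWithin {U : Set (Fin 2 → ℝ)}
    (h : ∀ᶠ z in codiscreteWithin (reImEquiv ⁻¹' U), complexGradient f z ≠ 0) :
    {q | ¬(pd 0 f q = 0 ∧ pd 1 f q = 0)} ∈ codiscreteWithin U := by
  have h' := reImEquiv.toHomeomorph.isEmbedding.image_mem_codiscreteWithin.2 h
  simp only [ContinuousLinearEquiv.coe_toHomeomorph,
    Set.image_preimage_eq _ reImEquiv.surjective] at h'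
  refine mem_of_superset h' ?_
  rintro _ ⟨z, hz, rfl⟩
  exact mt complexGradient_eq_zero_iff.2 hz

theorem harmonic_constant_or_gradient_zeros_isolated_general
    (U : Set (Fin 2 → ℝ)) (hUopen : IsOpen U) (hUconn : IsConnected U)
    (f : (Fin 2 → ℝ) → ℝ) (hf : ContDiffOn ℝ 2 f U)
    (hharm : ∀ p ∈ U, pd 0 (pd 0 f) p + pd 1 (pd 1 f) p = 0) :
    (∀ p ∈ U, ∀ q ∈ U, f p = f q) ∨
      (∀ p ∈ {q ∈ U | pd 0 f q = 0 ∧ pd 1 f q = 0},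
        𝓝[{q ∈ U | pd 0 f q = 0 ∧ pd 1 f q = 0} \ {p}] p = ⊥) := by
  have hV : IsPreconnected (reImEquiv ⁻¹' U) := by
    rw [← reImEquiv.image_symm_eq_preimage]
    exact (hUconn.image _ reImEquiv.symm.continuous.continuousOn).isPreconnected
  rcases (analyticOnNhd_complexGradient hUopen hf hharm
    ).eqOn_zero_or_eventually_ne_zero_of_preconnected hV with hzero | hdiscrete
  · exact .inl <| is_const_of_complexGradient_eqOn_zero hUopen hUconn.isPreconnected
      (hf.differentiableOn two_ne_zero) hzero
  · refine .inr fun p hp ↦ ?_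
    convert nhdsWithin_sdiff_singleton_eq_bot_of_mem_codiscreteWithin
      (setOf_not_gradient_eq_zero_mem_codiscreteWithin hdiscrete) hp.1 using 3
    ext q
    simp only [Set.mem_ofPred_eq, Set.mem_sdiff, not_not]

/-- If `f` is a C² harmonic function on a connected, open, simply connected subset of `ℝ²`,
then either `f` is constant on `U`, or every zero of the gradient of `f` in `U` is isolated
in the set of such zeros. -/
theorem harmonic_constant_or_gradient_zeros_isolated
    (U : Set (Fin 2 → ℝ)) (hUopen : IsOpen U) (hUconn : IsConnected U)
    (hUsc : SimplyConnectedSpace U)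
    (f : (Fin 2 → ℝ) → ℝ) (hf : ContDiffOn ℝ 2 f U)
    (hharm : ∀ p ∈ U, pd 0 (pd 0 f) p + pd 1 (pd 1 f) p = 0) :
    (∀ p ∈ U, ∀ q ∈ U, f p = f q) ∨
      (∀ p ∈ {q ∈ U | pd 0 f q = 0 ∧ pd 1 f q = 0},
        𝓝[{q ∈ U | pd 0 f q = 0 ∧ pd 1 f q = 0} \ {p}] p = ⊥) :=
  harmonic_constant_or_gradient_zeros_isolated_general U hUopen hUconn f hf hharm
end

section
/- In the Weyl (diagonal) case, the canonical equations are consistent: if U₁, ..., U_{D−2} : Ω → ℝ are smooth axisymmetric solutions of (∂ᵣ² + (1/r)∂ᵣ + ∂_z²)Uᵢ = 0 on an open Ω ⊆ {(r,z) : r > 0} with Σᵢ Uᵢ = log r, then the 1-form ω = P dr + Q dz with P = −1/(2r) + (r/2)Σᵢ[(∂ᵣUᵢ)² − (∂_zUᵢ)²] and Q = r Σᵢ ∂ᵣUᵢ ∂_zUᵢ is closed, i.e. ∂_z P = ∂ᵣ Q. -/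
/-- Consistency of the Weyl equations: if `U₁, …, U_{D−2}` are smooth solutions of the
cylindrical Laplace equation with `Σᵢ Uᵢ = log r`, then the 1-form `ω = P dr + Q dz` with
`P = −1/(2r) + (r/2)Σᵢ[(∂ᵣUᵢ)² − (∂_zUᵢ)²]` and `Q = r Σᵢ ∂ᵣUᵢ ∂_zUᵢ` is closed. -/
theorem weyl_integrability (D : ℕ)
    (Ω : Set (Fin 2 → ℝ)) (hΩopen : IsOpen Ω) (hΩconn : IsConnected Ω)
    (hΩpos : ∀ p ∈ Ω, 0 < p 0)
    (Uf : Fin (D - 2) → (Fin 2 → ℝ) → ℝ)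
    (hUf : ∀ i, ContDiffOn ℝ (⊤ : ℕ∞) (Uf i) Ω)
    (hlap : ∀ i, ∀ p ∈ Ω,
      pd 0 (pd 0 (Uf i)) p + (1 / p 0) * pd 0 (Uf i) p + pd 1 (pd 1 (Uf i)) p = 0)
    (hsum : ∀ p ∈ Ω, ∑ i, Uf i p = Real.log (p 0)) :
    ∀ p ∈ Ω,
      pd 1 (fun q => -1 / (2 * q 0) +
        (q 0 / 2) * ∑ i, ((pd 0 (Uf i) q) ^ 2 - (pd 1 (Uf i) q) ^ 2)) p =
      pd 0 (fun q => q 0 * ∑ i, pd 0 (Uf i) q * pd 1 (Uf i) q) p := by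
  intro p hp
  have hp0 : 0 < p 0 := hΩpos p hp
  have hC : ∀ i, ContDiffAt ℝ (⊤ : ℕ∞) (Uf i) p := fun i => (hUf i).contDiffAt (hΩopen.mem_nhds hp)
  have hC' : ∀ i, ContDiffAt ℝ (⊤ : ℕ∞) (fderiv ℝ (Uf i)) p := fun i => (hC i).fderiv_right (by simp)
  have hdf : ∀ i, DifferentiableAt ℝ (fderiv ℝ (Uf i)) p :=
    fun i => (hC' i).differentiableAt (by simp)
  have hpd : ∀ (j : Fin 2) i, ContDiffAt ℝ (⊤ : ℕ∞) (pd j (Uf i)) p := fun j i =>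
    (hC' i).clm_apply contDiffAt_const
  have hd : ∀ (j : Fin 2) i, DifferentiableAt ℝ (pd j (Uf i)) p := fun j i =>
    (hpd j i).differentiableAt (by simp)
  have hD : ∀ (j : Fin 2) i, HasFDerivAt (pd j (Uf i)) (fderiv ℝ (pd j (Uf i)) p) p :=
    fun j i => (hd j i).hasFDerivAt
  -- second derivatives via the full second fderiv
  have hpd2 : ∀ (j k : Fin 2) i, fderiv ℝ (pd j (Uf i)) p (Pi.single k 1) =
      fderiv ℝ (fderiv ℝ (Uf i)) p (Pi.single k 1) (Pi.single j 1) := by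
    intro j k i
    have : fderiv ℝ (fun q => fderiv ℝ (Uf i) q (Pi.single j 1)) p =
        ((fderiv ℝ (Uf i) p).comp (fderiv ℝ (fun _ : Fin 2 → ℝ => (Pi.single j 1 : Fin 2 → ℝ)) p)) +
        (fderiv ℝ (fderiv ℝ (Uf i)) p).flip (Pi.single j 1) :=
      fderiv_clm_apply (hdf i) (differentiableAt_const _)
    rw [show pd j (Uf i) = fun q => fderiv ℝ (Uf i) q (Pi.single j 1) from rfl, this]
    simp
  have hsym : ∀ i, fderiv ℝ (pd 0 (Uf i)) p (Pi.single 1 1) =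
      fderiv ℝ (pd 1 (Uf i)) p (Pi.single 0 1) := by
    intro i
    rw [hpd2, hpd2]
    exact ((hC i).isSymmSndFDerivAt (by rw [minSmoothness_of_isRCLikeNormedField]; exact WithTop.coe_le_coe.mpr le_top)).eq _ _
  have hproj : HasFDerivAt (fun q : Fin 2 → ℝ => q 0)
      (ContinuousLinearMap.proj (R := ℝ) (φ := fun _ : Fin 2 => ℝ) 0) p :=
    hasFDerivAt_apply 0 p
  -- derivative of -1/(2 r)
  have heq : (fun t : ℝ => -1 / (2 * t)) = fun t => (-1/2 : ℝ) * t⁻¹ := by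
    funext t; rw [div_eq_mul_inv, mul_inv]; ring
  have hF1' : HasDerivAt (fun t : ℝ => -1 / (2 * t)) ((-1/2) * -((p 0) ^ 2)⁻¹) (p 0) := by
    rw [heq]; exact (hasDerivAt_inv (ne_of_gt hp0)).const_mul (-1/2)
  have hF1 : HasFDerivAt (fun q : Fin 2 → ℝ => -1 / (2 * q 0))
      (((-1/2) * -((p 0) ^ 2)⁻¹) • ContinuousLinearMap.proj (R := ℝ) (φ := fun _ : Fin 2 => ℝ) 0) p :=
    hF1'.comp_hasFDerivAt (h₂ := fun t : ℝ => -1 / (2 * t)) (f := fun q : Fin 2 → ℝ => q 0) p hproj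
  have hF2 : HasFDerivAt (fun q : Fin 2 → ℝ => q 0 / 2)
      ((2 : ℝ)⁻¹ • ContinuousLinearMap.proj (R := ℝ) (φ := fun _ : Fin 2 => ℝ) 0) p := by
    simpa [div_eq_mul_inv] using hproj.mul_const (2 : ℝ)⁻¹
  have hS : HasFDerivAt
      (fun q => ∑ i, ((pd 0 (Uf i) q) ^ 2 - (pd 1 (Uf i) q) ^ 2))
      (∑ i, ((pd 0 (Uf i) p • fderiv ℝ (pd 0 (Uf i)) p + pd 0 (Uf i) p • fderiv ℝ (pd 0 (Uf i)) p)
        - (pd 1 (Uf i) p • fderiv ℝ (pd 1 (Uf i)) p + pd 1 (Uf i) p • fderiv ℝ (pd 1 (Uf i)) p))) p := by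
    apply HasFDerivAt.fun_sum
    intro i _
    simp only [pow_two]
    exact ((hD 0 i).mul (hD 0 i)).sub ((hD 1 i).mul (hD 1 i))
  have hT : HasFDerivAt (fun q => ∑ i, pd 0 (Uf i) q * pd 1 (Uf i) q)
      (∑ i, (pd 0 (Uf i) p • fderiv ℝ (pd 1 (Uf i)) p + pd 1 (Uf i) p • fderiv ℝ (pd 0 (Uf i)) p)) p :=
    HasFDerivAt.fun_sum fun i _ => (hD 0 i).mul (hD 1 i)
  have hL := hF1.fun_add (hF2.fun_mul hS)
  have hR := hproj.fun_mul hT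
  have eL := hL.fderiv
  have eR := hR.fderiv
  show fderiv ℝ _ p (Pi.single 1 1) = fderiv ℝ _ p (Pi.single 0 1)
  rw [eL, eR]
  simp only [ContinuousLinearMap.add_apply, ContinuousLinearMap.smul_apply,
    ContinuousLinearMap.coe_sum', Finset.sum_apply, ContinuousLinearMap.sub_apply,
    ContinuousLinearMap.proj_apply, smul_eq_mul]
  have h10 : (Pi.single 1 1 : Fin 2 → ℝ) 0 = 0 := Pi.single_eq_of_ne (by decide) 1
  have h00 : (Pi.single 0 1 : Fin 2 → ℝ) 0 = 1 := Pi.single_eq_same 0 1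
  rw [h10, h00]
  simp only [mul_zero, zero_add, add_zero, zero_mul, mul_one]
  have pdeq : ∀ (j : Fin 2) (f : (Fin 2 → ℝ) → ℝ) (q : Fin 2 → ℝ),
      fderiv ℝ f q (Pi.single j 1) = pd j f q := fun _ _ _ => rfl
  simp only [pdeq]
  rw [Finset.mul_sum, Finset.mul_sum, ← Finset.sum_add_distrib]
  apply Finset.sum_congr rfl
  intro i _
  have hl := hlap i p hp
  have h4 : p 0 * (1 / p 0) = 1 := mul_one_div_cancel (ne_of_gt hp0)
  have hs : pd 1 (pd 0 (Uf i)) p = pd 0 (pd 1 (Uf i)) p := hsym i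
  linear_combination (p 0 * pd 0 (Uf i) p) * hs - (p 0 * pd 1 (Uf i) p) * hl
    + (pd 0 (Uf i) p * pd 1 (Uf i) p) * h4
end
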